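/- arXiv:2107.12121 — 2 statements merged into one kernel-verified Lean document; each statement's English description precedes it below -/
import Mathlib

section
/- Let m, n ≥ 2 be coprime with d = ord_m(n), and let a_1,…,a_d be the period of the base-n expansion of 1/m. For any t ≥ 0, the periodic base-n expansion with digit sequence a_{t+1},…,a_d,a_1,…,a_t (repeated) equals the fractional part of n^t/m, i.e., [n^t]_m/m. -/
/-- Least positive residue of `g` modulo `m`. -/
def lpr (g m : ℕ) : ℕ := if g % m = 0 then m else g % m

/-- The `k`-th digit of the base-`n` expansion of `1/m`:
`a_k = ⌊n^k/m⌋ − n·⌊n^{k−1}/m⌋`. -/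
def baseDigit (n m k : ℕ) : ℕ := n ^ k / m - n * (n ^ (k - 1) / m)

/-! With `r_k = n^k mod m`, long division gives `m·a_{k+1} = n·r_k − r_{k+1}`. Hence `m` times
the numerator `∑_{j<d} a_{t+j+1} n^{d−1−j}` telescopes to `r_t·n^d − r_{t+d}`, and
`r_{t+d} = r_t` (as does `a_{k+d} = a_k`) because `n^d ≡ 1 (mod m)`. Coprimality makes
`r_t ≠ 0`, so `r_t = [n^t]_m`. -/

open Finset

lemma lpr_eq_mod {g m : ℕ} (h : ¬ m ∣ g) : lpr g m = g % m :=
  if_neg fun h0 => h (Nat.dvd_of_mod_eq_zero h0)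

lemma baseDigit_succ (n m k : ℕ) : baseDigit n m (k + 1) = n * (n ^ k % m) / m := by
  rcases m.eq_zero_or_pos with rfl | hm
  · simp [baseDigit]
  have h : n ^ (k + 1) = m * (n * (n ^ k / m)) + n * (n ^ k % m) := by
    rw [pow_succ']
    nth_rw 1 [← Nat.div_add_mod (n ^ k) m]
    ring
  rw [baseDigit, Nat.add_sub_cancel, h, Nat.mul_add_div hm, Nat.add_sub_cancel_left]

lemma mul_baseDigit_succ_add_pow_mod (n m k : ℕ) :
    m * baseDigit n m (k + 1) + n ^ (k + 1) % m = n * (n ^ k % m) := by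
  rw [baseDigit_succ, pow_succ', ← Nat.mul_mod_mod, Nat.div_add_mod]

lemma pow_mod_eq_of_pow_eq_one {M : Type*} [Monoid M] {x : M} {d : ℕ} (hd : x ^ d = 1)
    (k : ℕ) : x ^ (k % d) = x ^ k := by
  rw [← pow_mod_orderOf, Nat.mod_mod_of_dvd k (orderOf_dvd_of_pow_eq_one hd), pow_mod_orderOf]

lemma pow_mod_mod_eq_pow_mod {n m d : ℕ} (hd : (n : ZMod m) ^ d = 1) (k : ℕ) :
    n ^ (k % d) % m = n ^ k % m := by
  rw [← ZMod.natCast_eq_natCast_iff', Nat.cast_pow, Nat.cast_pow, pow_mod_eq_of_pow_eq_one hd]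

lemma baseDigit_mod_add_one {n m d : ℕ} (hd : (n : ZMod m) ^ d = 1) (k : ℕ) :
    baseDigit n m (k % d + 1) = baseDigit n m (k + 1) := by
  rw [baseDigit_succ, baseDigit_succ, pow_mod_mod_eq_pow_mod hd]

lemma sum_range_mul_sub_mul_pow {R : Type*} [CommRing R] (x : R) (g : ℕ → R) (d : ℕ) :
    ∑ j ∈ range d, (x * g j - g (j + 1)) * x ^ (d - 1 - j) = g 0 * x ^ d - g d := by
  calc ∑ j ∈ range d, (x * g j - g (j + 1)) * x ^ (d - 1 - j)
      = ∑ j ∈ range d, (g j * x ^ (d - j) - g (j + 1) * x ^ (d - (j + 1))) := by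
        refine sum_congr rfl fun j hj => ?_
        obtain ⟨i, rfl⟩ := Nat.exists_eq_add_of_lt (mem_range.mp hj)
        rw [show j + i + 1 - 1 - j = i by omega, show j + i + 1 - j = i + 1 by omega,
          show j + i + 1 - (j + 1) = i by omega]
        ring
    _ = g 0 * x ^ d - g d := by rw [sum_range_sub' (fun j => g j * x ^ (d - j))]; simp

lemma mul_sum_shifted_baseDigit {n m d : ℕ} (hd : (n : ZMod m) ^ d = 1) (t : ℕ) :
    (m : ℝ) * ∑ j ∈ range d, (baseDigit n m ((t + j) % d + 1) : ℝ) * n ^ (d - 1 - j)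
      = (n ^ t % m : ℕ) * (n ^ d - 1) := by
  have hdigit (k : ℕ) :
      (m : ℝ) * baseDigit n m (k + 1)
        = n * (n ^ k % m : ℕ) - (n ^ (k + 1) % m : ℕ) := by
    rw [eq_sub_iff_add_eq]
    exact_mod_cast mul_baseDigit_succ_add_pow_mod n m k
  rw [mul_sum]
  simp_rw [baseDigit_mod_add_one hd, ← mul_assoc, hdigit]
  have htelescope :=
    sum_range_mul_sub_mul_pow (n : ℝ) (fun j => ((n ^ (t + j) % m : ℕ) : ℝ)) d
  simp only [add_zero, ← add_assoc] at htelescope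
  rw [htelescope, ← pow_mod_mod_eq_pow_mod hd (t + d), Nat.add_mod_right,
    pow_mod_mod_eq_pow_mod hd]
  ring

lemma orderOf_natCast_pos {m n : ℕ} [NeZero m] (h : n.Coprime m) :
    0 < orderOf (n : ZMod m) := by
  rw [← ZMod.coe_unitOfCoprime n h, orderOf_units]
  exact orderOf_pos _

theorem shifted_expansion_value (m n : ℕ) (hm : 2 ≤ m) (hn : 2 ≤ n)
    (hco : Nat.Coprime m n) (t : ℕ) :
    (∑ j ∈ Finset.range (orderOf (n : ZMod m)),
        (baseDigit n m (((t + j) % orderOf (n : ZMod m)) + 1) : ℝ) *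
          n ^ (orderOf (n : ZMod m) - 1 - j)) / (n ^ orderOf (n : ZMod m) - 1)
      = (lpr (n ^ t) m : ℝ) / m := by
  have : NeZero m := ⟨by omega⟩
  have hord := orderOf_natCast_pos (m := m) hco.symm
  have hn' : (2 : ℝ) ≤ n := by exact_mod_cast hn
  have hpow : (2 : ℝ) ≤ (n : ℝ) ^ orderOf (n : ZMod m) :=
    hn'.trans (le_self_pow₀ (by linarith) hord.ne')
  have hndvd : ¬ m ∣ n ^ t := fun h => by
    have := Nat.Coprime.eq_one_of_dvd (hco.pow_right t) h
    omega
  rw [lpr_eq_mod hndvd, div_eq_div_iff (by linarith) (by positivity),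
    ← mul_sum_shifted_baseDigit (pow_orderOf_eq_one _) t]
  ring
end

section
/- Let m, n ≥ 2 be coprime with d = ord_m(n), and let a_1,…,a_d be the period of the base-n expansion of 1/m. If a ≡ n^t (mod m) with 1 ≤ a ≤ m, then a/m (hence [n^t]_m/m) has base-n expansion equal to the periodic expansion of the cyclically shifted string (a_{t+1},…,a_d,a_1,…,a_t). In particular the set of values {[n^t]_m/m : t ≥ 0} equals the set of values of cyclic shifts of the period of 1/m. -/
/-- Value of the purely periodic base-`n` expansion obtained by cyclically
shifting the period of `1/m` by `t`. -/
noncomputable def shiftedValue (n m t : ℕ) : ℝ :=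
  (∑ j ∈ Finset.range (orderOf (n : ZMod m)),
      (baseDigit n m (((t + j) % orderOf (n : ZMod m)) + 1) : ℝ) *
        n ^ (orderOf (n : ZMod m) - 1 - j)) / (n ^ orderOf (n : ZMod m) - 1)

lemma baseDigit_eq (n m k : ℕ) (hm : 0 < m) (hk : 1 ≤ k) :
    (m : ℝ) * baseDigit n m k = n * (n ^ (k-1) % m : ℕ) - ((n ^ k % m : ℕ) : ℝ) := by
  have hk' : n ^ k = n * n ^ (k-1) := by
    rw [← pow_succ']
    congr 1
    omega
  have hle : n * (n ^ (k-1) / m) ≤ n ^ k / m := by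
    rw [Nat.le_div_iff_mul_le hm, hk']
    calc n * (n ^ (k-1) / m) * m = n * (n ^ (k-1) / m * m) := by ring
    _ ≤ n * n ^ (k-1) := Nat.mul_le_mul_left _ (Nat.div_mul_le_self _ _)
  have h1 := Nat.div_add_mod (n ^ (k-1)) m
  have h2 := Nat.div_add_mod (n ^ k) m
  have h1' : (m:ℝ) * ((n ^ (k-1) / m : ℕ):ℝ) + ((n ^ (k-1) % m : ℕ):ℝ) = ((n:ℝ))^(k-1) := by
    exact_mod_cast congrArg (Nat.cast : ℕ → ℝ) h1
  have h2' : (m:ℝ) * ((n ^ k / m : ℕ):ℝ) + ((n ^ k % m : ℕ):ℝ) = (n:ℝ) * ((n:ℝ))^(k-1) := by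
    have hc : (m:ℝ) * ((n ^ k / m : ℕ):ℝ) + ((n ^ k % m : ℕ):ℝ) = ((n:ℝ))^k := by
      exact_mod_cast congrArg (Nat.cast : ℕ → ℝ) h2
    rw [hc, show ((n:ℝ))^k = (n:ℝ) * ((n:ℝ))^(k-1) from by exact_mod_cast congrArg (Nat.cast : ℕ → ℝ) hk']
  unfold baseDigit
  push_cast [hle]
  linear_combination h2' - (n:ℝ) * h1'

lemma pow_mod_periodic (n m : ℕ) (hm : 2 ≤ m) (i : ℕ) :
    n ^ (i % orderOf (n : ZMod m)) % m = n ^ i % m := by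
  haveI : NeZero m := ⟨by omega⟩
  have h : ((n : ZMod m)) ^ (i % orderOf (n : ZMod m)) = (n : ZMod m) ^ i :=
    pow_mod_orderOf ..
  have h2 : ((n ^ (i % orderOf (n : ZMod m)) : ℕ) : ZMod m) = ((n ^ i : ℕ) : ZMod m) := by
    push_cast
    exact h
  exact (ZMod.natCast_eq_natCast_iff _ _ _).mp h2

lemma order_pos (n m : ℕ) (hm : 2 ≤ m) (hco : Nat.Coprime m n) :
    0 < orderOf (n : ZMod m) := by
  haveI : NeZero m := ⟨by omega⟩
  have hu : IsUnit (n : ZMod m) := (ZMod.isUnit_iff_coprime n m).mpr hco.symm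
  obtain ⟨u, hu⟩ := hu
  rw [← hu, orderOf_units]
  exact orderOf_pos u

lemma shiftedValue_eq (m n : ℕ) (hm : 2 ≤ m) (hn : 2 ≤ n) (hco : Nat.Coprime m n) (t : ℕ) :
    shiftedValue n m t = ((n ^ t % m : ℕ) : ℝ) / m := by
  set d := orderOf (n : ZMod m) with hd
  have hdpos : 0 < d := order_pos n m hm hco
  have hmpos : 0 < m := by omega
  -- periodicity of r i := n^i % m
  have hper : ∀ i, n ^ (i % d) % m = n ^ i % m := fun i => pow_mod_periodic n m hm i
  -- key sum identity
  have key : (m : ℝ) * ∑ j ∈ Finset.range d,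
      (baseDigit n m (((t + j) % d) + 1) : ℝ) * (n:ℝ) ^ (d - 1 - j)
      = ((n ^ t % m : ℕ) : ℝ) * ((n:ℝ) ^ d - 1) := by
    rw [Finset.mul_sum]
    have hterm : ∀ j ∈ Finset.range d,
        (m:ℝ) * ((baseDigit n m (((t + j) % d) + 1) : ℝ) * (n:ℝ) ^ (d - 1 - j))
        = (n:ℝ) ^ (d - j) * ((n ^ (t+j) % m : ℕ) : ℝ)
          - (n:ℝ) ^ (d - (j+1)) * ((n ^ (t+(j+1)) % m : ℕ) : ℝ) := by
      intro j hj
      rw [Finset.mem_range] at hj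
      have hb := baseDigit_eq n m (((t + j) % d) + 1) hmpos (by omega)
      have e1 : (((t + j) % d) + 1) - 1 = (t + j) % d := by omega
      rw [e1] at hb
      have e2 : n ^ ((t + j) % d) % m = n ^ (t+j) % m := hper (t+j)
      have e3 : n ^ (((t + j) % d) + 1) % m = n ^ (t+(j+1)) % m := by
        have : (n * n ^ ((t + j) % d)) % m = (n * n ^ (t+j)) % m :=
          (Nat.ModEq.mul_left n (e2)).symm ▸ rfl
        calc n ^ (((t + j) % d) + 1) % m = (n * n ^ ((t + j) % d)) % m := by
              rw [pow_succ']
          _ = (n * n ^ (t+j)) % m := Nat.ModEq.mul_left n e2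
          _ = n ^ (t+(j+1)) % m := by rw [← add_assoc, pow_succ']
      rw [e2, e3] at hb
      have epow : (n:ℝ) ^ (d - j) = (n:ℝ) * (n:ℝ) ^ (d - 1 - j) := by
        rw [← pow_succ']
        congr 1
        omega
      have epow2 : d - (j+1) = d - 1 - j := by omega
      rw [epow, epow2]
      calc (m:ℝ) * ((baseDigit n m (((t + j) % d) + 1) : ℝ) * (n:ℝ) ^ (d - 1 - j))
          = ((m:ℝ) * (baseDigit n m (((t + j) % d) + 1) : ℝ)) * (n:ℝ) ^ (d - 1 - j) := by ring
        _ = ((n:ℝ) * ((n ^ (t+j) % m : ℕ) : ℝ) - ((n ^ (t+(j+1)) % m : ℕ) : ℝ)) * (n:ℝ) ^ (d - 1 - j) := by rw [hb]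
        _ = _ := by ring
    rw [Finset.sum_congr rfl hterm]
    have tel := Finset.sum_range_sub' (fun j => (n:ℝ) ^ (d - j) * ((n ^ (t+j) % m : ℕ) : ℝ)) d
    rw [tel]
    have e4 : n ^ (t + d) % m = n ^ t % m := by
      rw [← hper (t + d), ← hper t, Nat.add_mod_right]
    simp only [Nat.sub_zero, Nat.add_zero, Nat.sub_self, pow_zero, one_mul, e4]
    ring
  -- finish
  have hne1 : (n:ℝ) ^ d - 1 ≠ 0 := by
    have : (1:ℝ) < (n:ℝ) ^ d := by
      have : (1:ℝ) < (n:ℝ) := by exact_mod_cast hn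
      exact one_lt_pow₀ this (by omega)
    linarith
  have hmne : (m:ℝ) ≠ 0 := by positivity
  rw [shiftedValue, ← hd, div_eq_div_iff hne1 hmne]
  linear_combination key

theorem cyclic_shift_expansion (m n : ℕ) (hm : 2 ≤ m) (hn : 2 ≤ n)
    (hco : Nat.Coprime m n) :
    (∀ a t : ℕ, a ≡ n ^ t [MOD m] → 1 ≤ a → a ≤ m →
        (a : ℝ) / m = shiftedValue n m t) ∧
    {x : ℝ | ∃ t : ℕ, x = (lpr (n ^ t) m : ℝ) / m}
      = {x : ℝ | ∃ t : ℕ, x = shiftedValue n m t} := by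
  have hmod : ∀ t : ℕ, 1 ≤ n ^ t % m := by
    intro t
    rcases Nat.eq_zero_or_pos (n ^ t % m) with h | h
    · exfalso
      have hdvd : m ∣ n ^ t := Nat.dvd_of_mod_eq_zero h
      have hone : m = 1 := (hco.pow_right t).eq_one_of_dvd hdvd
      omega
    · exact h
  have h1 : ∀ a t : ℕ, a ≡ n ^ t [MOD m] → 1 ≤ a → a ≤ m →
      (a : ℝ) / m = shiftedValue n m t := by
    intro a t hmeq ha1 ham
    rw [shiftedValue_eq m n hm hn hco t]
    congr 1
    have heq : a % m = n ^ t % m := hmeq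
    have hr := hmod t
    have ha : a = n ^ t % m := by
      rcases eq_or_lt_of_le ham with h | h
      · rw [h, Nat.mod_self] at heq; omega
      · rw [Nat.mod_eq_of_lt h] at heq; exact heq
    exact_mod_cast congrArg (Nat.cast : ℕ → ℝ) ha
  refine ⟨h1, ?_⟩
  have hlpr : ∀ t, (lpr (n ^ t) m : ℝ) / m = shiftedValue n m t := by
    intro t
    have hr := hmod t
    have hl : lpr (n ^ t) m = n ^ t % m := by
      unfold lpr; rw [if_neg (by omega)]
    apply h1
    · rw [hl]; exact Nat.mod_modEq _ _
    · rw [hl]; exact hr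
    · rw [hl]; exact le_of_lt (Nat.mod_lt _ (by omega))
  ext x
  simp only [Set.mem_setOf_eq]
  constructor
  · rintro ⟨t, rfl⟩; exact ⟨t, (hlpr t)⟩
  · rintro ⟨t, rfl⟩; exact ⟨t, (hlpr t).symm⟩
end
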